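/- arXiv:1701.03920 — 3 statements merged into one kernel-verified Lean document; each statement's English description precedes it below -/
import Mathlib

section
/- Let n be a positive integer and let p < q be indices in {0,…,n−1}. The element x = (1 + e_p·e_q)/√2 of the Clifford algebra Cₙ lies in the spin group Spin(n), and for every vector v ∈ ℝⁿ one has x·ι(v)·x̄ = ι(w), where w is the vector with w_p = −v_q, w_q = v_p, and w_i = v_i for all i ∉ {p, q}. (In other words, the twisted conjugation λ(x) equals the signed transposition matrix P′_{(p q)} = diag(1,…,1,−1,1,…,1)·P_{(p q)}, with the −1 in position p, where P_{(p q)} is the permutation matrix of the transposition (p q).) -/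
/-!
Put `u = e_p e_q`. Then `u² = -1` and `x̄ = (1 - u)/√2`, so `x x̄ = (1 + u)(1 - u)/2 = 1`.
Conjugation by `1 + u` is computed on generators: if `z` commutes with `u` then
`(1 + u) z (1 - u) = 2z`, and if `z` anticommutes with `u` then
`(1 + u) z (1 - u) = z (1 - u)² = 2uz`. Now `e_p` and `e_q` anticommute with `u`, with
`u e_p = e_q` and `u e_q = -e_p`, while every other `e_k` commutes with `u`. Both sides of the
conjugation formula are linear in `v`, so the generators suffice.
-/

open CliffordAlgebra

/-- The quadratic form `Q(v) = -∑ i, v i ^ 2` on `ℝⁿ = (Fin n → ℝ)`. -/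
noncomputable def Qneg (n : ℕ) : QuadraticForm ℝ (Fin n → ℝ) :=
  QuadraticMap.weightedSumSquares ℝ (fun _ : Fin n => (-1 : ℝ))

/-- The Clifford algebra `Cₙ` of `Qneg n`. -/
noncomputable abbrev Cl (n : ℕ) := CliffordAlgebra (Qneg n)

/-- The generator `eᵢ = ι(εᵢ)`, the image of the `i`-th standard basis vector. -/
noncomputable def e {n : ℕ} (i : Fin n) : Cl n := ι (Qneg n) (Pi.single i 1)

/-- The Clifford conjugate `x̄ = reverse (involute x)`. -/
noncomputable def conj {n : ℕ} (x : Cl n) : Cl n := reverse (involute x)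

/-- `x` lies in the spin group `Spin(n)`: it is a unit with `involute x = x` and `x * x̄ = 1`. -/
def InSpin {n : ℕ} (x : Cl n) : Prop :=
  IsUnit x ∧ involute x = x ∧ x * conj x = 1

section Rotor

variable {R B : Type*} [CommRing R] [Ring B] [Algebra R B] {u z : B}

theorem one_add_mul_one_sub_of_mul_self_eq_neg_one (hu : u * u = -1) :
    (1 + u) * (1 - u) = 2 := calc
  (1 + u) * (1 - u) = 1 - u * u := by noncomm_ring
  _ = 2 := by rw [hu]; norm_num

theorem one_sub_mul_one_add_of_mul_self_eq_neg_one (hu : u * u = -1) :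
    (1 - u) * (1 + u) = 2 := calc
  (1 - u) * (1 + u) = 1 - u * u := by noncomm_ring
  _ = 2 := by rw [hu]; norm_num

theorem one_add_mul_mul_one_sub_of_commute (hu : u * u = -1) (h : Commute z u) :
    (1 + u) * z * (1 - u) = 2 * z := by
  rw [((Commute.one_left z).add_left h.symm).eq, mul_assoc,
    one_add_mul_one_sub_of_mul_self_eq_neg_one hu, (Commute.ofNat_right z 2).eq]

theorem one_add_mul_mul_one_sub_of_anticomm (hu : u * u = -1) (h : z * u = -(u * z)) :
    (1 + u) * z * (1 - u) = 2 * (u * z) := calc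
  (1 + u) * z * (1 - u) = z * (1 - u) * (1 - u) := by
    rw [add_mul, one_mul, ← neg_neg (u * z), ← h]; noncomm_ring
  _ = z * (1 - 2 * u + u * u) := by noncomm_ring
  _ = 2 * (u * z) := by rw [hu, ← neg_neg (u * z), ← h]; noncomm_ring

theorem smul_mul_mul_smul_of_two_mul {r : R} (hr : 2 * (r * r) = 1) {s t w : B}
    (h : s * z * t = 2 * w) : r • s * z * (r • t) = w := by
  rw [smul_mul_assoc, smul_mul_assoc, mul_smul_comm, smul_smul, h, two_mul, ← two_smul R w,
    smul_smul, mul_comm, hr, one_smul]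

theorem smul_mul_smul_of_mul_eq_two {r : R} (hr : 2 * (r * r) = 1) {s t : B} (h : s * t = 2) :
    r • s * (r • t) = 1 := by
  simpa using smul_mul_mul_smul_of_two_mul hr (z := (1 : B)) (w := 1) (by simpa using h)

end Rotor

section SignedSwap

variable {R ι : Type*} [Ring R] [DecidableEq ι]

def signedSwap (p q : ι) : (ι → R) →ₗ[R] ι → R :=
  LinearMap.pi fun i =>
    if i = p then -LinearMap.proj q else if i = q then LinearMap.proj p else LinearMap.proj i

theorem signedSwap_apply (p q : ι) (v : ι → R) :
    signedSwap p q v = fun i => if i = p then -(v q) else if i = q then v p else v i := by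
  ext i
  simp only [signedSwap, LinearMap.pi_apply]
  split_ifs <;> rfl

variable {p q : ι}

theorem signedSwap_single_left (h : p ≠ q) :
    signedSwap p q (Pi.single p 1) = (Pi.single q 1 : ι → R) := by
  ext i
  rw [signedSwap_apply]
  simp only [Pi.single_apply]
  grind

theorem signedSwap_single_right (h : p ≠ q) :
    signedSwap p q (Pi.single q 1) = -(Pi.single p 1 : ι → R) := by
  ext i
  rw [signedSwap_apply]
  simp only [Pi.single_apply, Pi.neg_apply]
  grind

theorem signedSwap_single_of_ne {i : ι} (hp : i ≠ p) (hq : i ≠ q) :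
    signedSwap p q (Pi.single i 1) = (Pi.single i 1 : ι → R) := by
  ext j
  rw [signedSwap_apply]
  simp only [Pi.single_apply]
  grind

end SignedSwap

section Generators

variable {n : ℕ} {i j k : Fin n}

theorem Qneg_single (i : Fin n) : Qneg n (Pi.single i 1) = -1 := by
  simp [Qneg, QuadraticMap.weightedSumSquares_apply, Pi.single_apply]

theorem Qneg_isOrtho_single (h : i ≠ j) : (Qneg n).IsOrtho (Pi.single i 1) (Pi.single j 1) := by
  rw [QuadraticMap.isOrtho_def]
  simp [Qneg, QuadraticMap.weightedSumSquares_apply, Pi.single_apply, mul_add,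
    Finset.sum_add_distrib, h, h.symm]

theorem e_mul_self (i : Fin n) : e i * e i = -1 := by
  rw [e, ι_sq_scalar, Qneg_single, map_neg, map_one]

theorem e_mul_e_comm (h : i ≠ j) : e i * e j = -(e j * e i) :=
  ι_mul_ι_comm_of_isOrtho (Qneg_isOrtho_single h)

theorem e_mul_e_mul_self (h : i ≠ j) : e i * e j * (e i * e j) = -1 := calc
  e i * e j * (e i * e j) = -(e i * e i * (e j * e j)) := by
    rw [mul_assoc, ← mul_assoc (e j), e_mul_e_comm h.symm]; noncomm_ring
  _ = -1 := by rw [e_mul_self, e_mul_self]; noncomm_ring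

theorem involute_e_mul_e (i j : Fin n) : involute (e i * e j) = e i * e j := by
  rw [map_mul, e, e, involute_ι, involute_ι, neg_mul_neg]

theorem conj_e_mul_e (i j : Fin n) : conj (e i * e j) = e j * e i := by
  rw [conj, involute_e_mul_e, reverse.map_mul, e, e, reverse_ι, reverse_ι]

theorem e_mul_e_mul_e_self_left (h : i ≠ j) : e i * e j * e i = e j := by
  rw [e_mul_e_comm h, neg_mul, mul_assoc, e_mul_self, mul_neg_one, neg_neg]

theorem e_mul_e_mul_e_self_right (i j : Fin n) : e i * e j * e j = -e i := by
  rw [mul_assoc, e_mul_self, mul_neg_one]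

theorem e_self_mul_e_mul_e_left (i j : Fin n) : e i * (e i * e j) = -e j := by
  rw [← mul_assoc, e_mul_self, neg_one_mul]

theorem e_self_mul_e_mul_e_right (h : i ≠ j) : e j * (e i * e j) = e i := by
  rw [← mul_assoc, e_mul_e_comm h.symm, neg_mul, mul_assoc, e_mul_self, mul_neg_one, neg_neg]

theorem commute_e_e_mul_e (hi : k ≠ i) (hj : k ≠ j) : Commute (e k) (e i * e j) := by
  rw [Commute, SemiconjBy, ← mul_assoc, e_mul_e_comm hi, neg_mul, mul_assoc, e_mul_e_comm hj,
    mul_neg, neg_neg, mul_assoc]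

theorem one_add_e_mul_e_mul_e_mul_one_sub (h : i ≠ j) (k : Fin n) :
    (1 + e i * e j) * e k * (1 - e i * e j) =
      2 * ι (Qneg n) (signedSwap i j (Pi.single k 1)) := by
  have hu := e_mul_e_mul_self h
  rcases eq_or_ne k i with rfl | hki
  · rw [one_add_mul_mul_one_sub_of_anticomm hu, e_mul_e_mul_e_self_left h,
      signedSwap_single_left h]
    · rfl
    · rw [e_self_mul_e_mul_e_left, e_mul_e_mul_e_self_left h]
  rcases eq_or_ne k j with rfl | hkj
  · rw [one_add_mul_mul_one_sub_of_anticomm hu, e_mul_e_mul_e_self_right,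
      signedSwap_single_right h, map_neg]
    · rfl
    · rw [e_self_mul_e_mul_e_right h, e_mul_e_mul_e_self_right, neg_neg]
  · rw [one_add_mul_mul_one_sub_of_commute hu (commute_e_e_mul_e hki hkj),
      signedSwap_single_of_ne hki hkj]
    rfl

theorem involute_smul_one_add_e_mul_e (r : ℝ) (i j : Fin n) :
    involute (r • (1 + e i * e j)) = r • (1 + e i * e j) := by
  rw [map_smul, map_add, map_one, involute_e_mul_e]

theorem conj_smul_one_add_e_mul_e (r : ℝ) (h : i ≠ j) :
    conj (r • (1 + e i * e j)) = r • (1 - e i * e j) := by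
  rw [conj, map_smul, map_smul, map_add, map_add, map_one, reverse.map_one, ← conj, conj_e_mul_e,
    e_mul_e_comm h.symm, ← sub_eq_add_neg]

end Generators

theorem stmt0_general (n : ℕ) (p q : Fin n) (hpq : p < q)
    (x : Cl n) (hx : x = (Real.sqrt 2)⁻¹ • (1 + e p * e q)) :
    InSpin x ∧ ∀ v : Fin n → ℝ,
      x * ι (Qneg n) v * conj x =
        ι (Qneg n) (fun i => if i = p then -(v q) else if i = q then v p else v i) := by
  have hne : p ≠ q := hpq.ne
  have hu := e_mul_e_mul_self hne
  have hr : 2 * ((√2)⁻¹ * (√2)⁻¹) = (1 : ℝ) := by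
    rw [← mul_inv, Real.mul_self_sqrt zero_le_two]; norm_num
  have hconj : conj x = (√2)⁻¹ • (1 - e p * e q) := by
    rw [hx, conj_smul_one_add_e_mul_e _ hne]
  have hmul : x * conj x = 1 := by
    rw [hconj, hx]
    exact smul_mul_smul_of_mul_eq_two hr (one_add_mul_one_sub_of_mul_self_eq_neg_one hu)
  have hmul' : conj x * x = 1 := by
    rw [hconj, hx]
    exact smul_mul_smul_of_mul_eq_two hr (one_sub_mul_one_add_of_mul_self_eq_neg_one hu)
  refine ⟨⟨⟨⟨x, conj x, hmul, hmul'⟩, rfl⟩, hx ▸ involute_smul_one_add_e_mul_e _ p q, hmul⟩,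
    fun v => ?_⟩
  have key : (LinearMap.mulLeft ℝ x ∘ₗ LinearMap.mulRight ℝ (conj x)) ∘ₗ ι (Qneg n) =
      ι (Qneg n) ∘ₗ signedSwap p q := (Pi.basisFun ℝ (Fin n)).ext fun k => by
    simp only [LinearMap.comp_apply, LinearMap.mulLeft_apply, LinearMap.mulRight_apply,
      Pi.basisFun_apply]
    rw [← mul_assoc, hconj, hx]
    exact smul_mul_mul_smul_of_two_mul hr (one_add_e_mul_e_mul_e_mul_one_sub hne k)
  simpa [mul_assoc, signedSwap_apply] using LinearMap.congr_fun key v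

/-- The element `x = (1 + eₚ e_q)/√2` lies in `Spin(n)`, and its twisted conjugation is the
signed transposition `P'_{(p q)}`: it sends `v` to the vector `w` with `w p = - v q`,
`w q = v p` and `w i = v i` otherwise. -/
theorem stmt0 (n : ℕ) (hn : 0 < n) (p q : Fin n) (hpq : p < q)
    (x : Cl n) (hx : x = (Real.sqrt 2)⁻¹ • (1 + e p * e q)) :
    InSpin x ∧ ∀ v : Fin n → ℝ,
      x * ι (Qneg n) v * conj x =
        ι (Qneg n) (fun i => if i = p then -(v q) else if i = q then v p else v i) :=
  stmt0_general n p q hpq x hx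
end

section
/- The group presented on three generators a, b, c with relations c² = 1, ac = ca, bc = cb, a³ = c, b² = c, and (ba)² = c is isomorphic to the dicyclic group of order 12 (Mathlib's QuaternionGroup 3), i.e. the semidirect product C₃ ⋊ C₄. -/
/-- Three generators `a`, `b`, `c`. -/
inductive Gen3 | a | b | c

/-- Relators corresponding to the relations
`c² = 1`, `ac = ca`, `bc = cb`, `a³ = c`, `b² = c`, `(ba)² = c`. -/
def relsDic3 : Set (FreeGroup Gen3) :=
  { FreeGroup.of Gen3.c ^ 2,
    FreeGroup.of Gen3.a * FreeGroup.of Gen3.c * (FreeGroup.of Gen3.a)⁻¹ * (FreeGroup.of Gen3.c)⁻¹,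
    FreeGroup.of Gen3.b * FreeGroup.of Gen3.c * (FreeGroup.of Gen3.b)⁻¹ * (FreeGroup.of Gen3.c)⁻¹,
    FreeGroup.of Gen3.a ^ 3 * (FreeGroup.of Gen3.c)⁻¹,
    FreeGroup.of Gen3.b ^ 2 * (FreeGroup.of Gen3.c)⁻¹,
    (FreeGroup.of Gen3.b * FreeGroup.of Gen3.a) ^ 2 * (FreeGroup.of Gen3.c)⁻¹ }

/-!
The assignment `a ↦ a 1`, `b ↦ xa 0`, `c ↦ a 3` respects the relations, so it defines a
homomorphism onto `QuaternionGroup 3`. Conversely, `QuaternionGroup n` is generated by `x = a 1`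
and `y = xa 0` subject to `x ^ (2n) = 1`, `y ^ 2 = x ^ n` and `x y x = y`: every element is
`x ^ i` or `y x ^ i`, and these words multiply by the same rules in any group satisfying those
relations. In the presented group `a ^ 6 = c ^ 2 = 1`, `b ^ 2 = c = a ^ 3`, and `(ba) ^ 2 = b ^ 2`
gives `aba = b`, so `a, b` define a homomorphism back; the two composites fix the generators.
-/

section PowOfPowEqOne

variable {G : Type*} [Group G] {m : ℕ} [NeZero m] {x : G}

theorem pow_val_add_of_pow_eq_one (hx : x ^ m = 1) (i j : ZMod m) :
    x ^ (i + j).val = x ^ i.val * x ^ j.val := by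
  rw [ZMod.val_add, ← pow_eq_pow_mod _ hx, pow_add]

theorem pow_val_neg_of_pow_eq_one (hx : x ^ m = 1) (i : ZMod m) :
    x ^ (-i).val = (x ^ i.val)⁻¹ :=
  eq_inv_of_mul_eq_one_left <| by
    rw [← pow_val_add_of_pow_eq_one hx, neg_add_cancel, ZMod.val_zero, pow_zero]

omit [NeZero m] in
theorem pow_val_natCast_of_pow_eq_one (hx : x ^ m = 1) (k : ℕ) :
    x ^ (k : ZMod m).val = x ^ k := by
  rw [ZMod.val_natCast, ← pow_eq_pow_mod _ hx]

theorem pow_mul_eq_mul_inv_pow_of_mul_mul_eq {y : G} (hxy : x * y * x = y) (k : ℕ) :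
    x ^ k * y = y * (x ^ k)⁻¹ := by
  have h : SemiconjBy y x⁻¹ x := mul_inv_eq_iff_eq_mul.2 hxy.symm
  rw [← inv_pow]
  exact (h.pow_right k).eq.symm

end PowOfPowEqOne

namespace QuaternionGroup

variable {G : Type*} [Group G] {n : ℕ} [NeZero n] {x y : G}

def lift (hx : x ^ (2 * n) = 1) (hy : y ^ 2 = x ^ n) (hxy : x * y * x = y) :
    QuaternionGroup n →* G where
  toFun
    | a i => x ^ i.val
    | xa i => y * x ^ i.val
  map_one' := show x ^ (0 : ZMod (2 * n)).val = 1 by simp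
  map_mul' := by
    have add := pow_val_add_of_pow_eq_one hx
    have neg := pow_val_neg_of_pow_eq_one hx
    have swap (i : ZMod (2 * n)) : x ^ i.val * y = y * x ^ (-i).val := by
      rw [neg, pow_mul_eq_mul_inv_pow_of_mul_mul_eq hxy]
    rintro (i | i) (j | j)
    · simp only [a_mul_a, add]
    · simp only [a_mul_xa, sub_eq_neg_add, add, ← mul_assoc, swap]
    · simp only [xa_mul_a, add, mul_assoc]
    · rw [xa_mul_xa]
      dsimp only
      rw [show (n : ZMod (2 * n)) + j - i = n + (-i + j) by ring, add, add,
        pow_val_natCast_of_pow_eq_one hx, ← hy, mul_assoc y, ← mul_assoc _ y, swap]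
      simp only [sq, mul_assoc]

@[simp]
theorem lift_a (hx : x ^ (2 * n) = 1) (hy : y ^ 2 = x ^ n) (hxy : x * y * x = y)
    (i : ZMod (2 * n)) : lift hx hy hxy (a i) = x ^ i.val := rfl

@[simp]
theorem lift_xa (hx : x ^ (2 * n) = 1) (hy : y ^ 2 = x ^ n) (hxy : x * y * x = y)
    (i : ZMod (2 * n)) : lift hx hy hxy (xa i) = y * x ^ i.val := rfl

end QuaternionGroup

section Dic3

open PresentedGroup

def dic3Gens : Gen3 → QuaternionGroup 3
  | .a => .a 1
  | .b => .xa 0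
  | .c => .a 3

theorem dic3Gens_rels : ∀ r ∈ relsDic3, FreeGroup.lift dic3Gens r = 1 := by
  simp only [relsDic3, Set.mem_insert_iff, Set.mem_singleton_iff]
  rintro r (rfl | rfl | rfl | rfl | rfl | rfl) <;> decide

abbrev Dic3 := PresentedGroup relsDic3

theorem of_c_sq : (of .c : Dic3) ^ 2 = 1 :=
  one_of_mem (rels := relsDic3) (x := FreeGroup.of Gen3.c ^ 2) (by simp [relsDic3])

theorem of_a_pow_three : (of .a : Dic3) ^ 3 = of .c :=
  mk_eq_mk_of_mul_inv_mem (rels := relsDic3) (x := FreeGroup.of Gen3.a ^ 3) (by simp [relsDic3])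

theorem of_b_sq : (of .b : Dic3) ^ 2 = of .c :=
  mk_eq_mk_of_mul_inv_mem (rels := relsDic3) (x := FreeGroup.of Gen3.b ^ 2) (by simp [relsDic3])

theorem of_b_mul_of_a_sq : (of .b * of .a : Dic3) ^ 2 = of .c :=
  mk_eq_mk_of_mul_inv_mem (rels := relsDic3)
    (x := (FreeGroup.of Gen3.b * FreeGroup.of Gen3.a) ^ 2) (by simp [relsDic3])

theorem of_a_pow_six : (of .a : Dic3) ^ (2 * 3) = 1 := by
  rw [pow_mul', of_a_pow_three, of_c_sq]

theorem of_b_sq_eq_of_a_pow_three : (of .b : Dic3) ^ 2 = of .a ^ 3 :=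
  of_b_sq.trans of_a_pow_three.symm

theorem of_a_mul_of_b_mul_of_a : (of .a * of .b * of .a : Dic3) = of .b :=
  mul_left_cancel (a := (of .b : Dic3)) <| by
    simpa only [sq, mul_assoc] using of_b_mul_of_a_sq.trans of_b_sq.symm

def toQuaternionGroup : Dic3 →* QuaternionGroup 3 := toGroup dic3Gens_rels

def ofQuaternionGroup : QuaternionGroup 3 →* Dic3 :=
  QuaternionGroup.lift of_a_pow_six of_b_sq_eq_of_a_pow_three of_a_mul_of_b_mul_of_a

theorem ofQuaternionGroup_comp_toQuaternionGroup :
    ofQuaternionGroup.comp toQuaternionGroup = MonoidHom.id Dic3 := by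
  have val_one : (1 : ZMod (2 * 3)).val = 1 := rfl
  have val_three : (3 : ZMod (2 * 3)).val = 3 := rfl
  ext t
  cases t <;>
    simp [ofQuaternionGroup, toQuaternionGroup, dic3Gens, val_one, val_three, of_a_pow_three]

theorem toQuaternionGroup_comp_ofQuaternionGroup :
    toQuaternionGroup.comp ofQuaternionGroup = MonoidHom.id (QuaternionGroup 3) := by
  ext (i | i) <;> simp [ofQuaternionGroup, toQuaternionGroup, dic3Gens, QuaternionGroup.a_one_pow]

end Dic3

/-- The group presented by `⟨a,b,c ∣ c² = [a,c] = [b,c] = 1, a³ = b² = (ba)² = c⟩` is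
isomorphic to the dicyclic group of order `12` (Mathlib's `QuaternionGroup 3`), i.e. the
semidirect product `C₃ ⋊ C₄`. -/
theorem stmt8 : Nonempty (PresentedGroup relsDic3 ≃* QuaternionGroup 3) :=
  ⟨toQuaternionGroup.toMulEquiv ofQuaternionGroup ofQuaternionGroup_comp_toQuaternionGroup
    toQuaternionGroup_comp_ofQuaternionGroup⟩
end

section
/- Let n be a positive integer. If an element x of the spin group Spin(n) satisfies x·ι(v)·x̄ = ι(v) for every v ∈ ℝⁿ, then x = 1 or x = −1. (That is, the kernel of the double covering λₙ : Spin(n) → SO(n), defined by λₙ(x)v = x·ι(v)·x̄, equals {±1}.) -/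
open CliffordAlgebra

/-! An even `x` commuting with every `ι v` has all its contractions zero, because
`ι v * x - involute x * ι v` is the contraction of `x` by the polar form at `v`, which is
nondegenerate for `Qneg n`. Moved to the exterior algebra by `changeForm` (which commutes with
contractions), such an element is killed by the number operator `∑ᵢ eᵢ ∧ (eᵢ* ⌋ ·)`, which acts
on `⋀ᵏ` as multiplication by `k`; hence it is a scalar `r`, and `x * x̄ = r² = 1` forces
`r = ±1`. -/

namespace ExteriorAlgebra

variable {R M I : Type*} [CommRing R] [AddCommGroup M] [Module R M] [Fintype I]

noncomputable def numberOperator (b : Module.Basis I R M) :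
    ExteriorAlgebra R M →ₗ[R] ExteriorAlgebra R M :=
  ∑ i, LinearMap.mulLeft R (ι R (b i)) ∘ₗ contractLeft (b.coord i)

theorem numberOperator_apply (b : Module.Basis I R M) (x : ExteriorAlgebra R M) :
    numberOperator b x = ∑ i, ι R (b i) * contractLeft (b.coord i) x := by
  simp [numberOperator, LinearMap.sum_apply]

theorem numberOperator_of_mem (b : Module.Basis I R M) {k : ℕ} {x : ExteriorAlgebra R M}
    (hx : x ∈ ⋀[R]^k M) : numberOperator b x = k • x := by
  induction hx using Submodule.pow_induction_on_left' with
  | algebraMap r => simp [numberOperator_apply, contractLeft_algebraMap]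
  | add x y k _ _ hx hy => rw [map_add, hx, hy, smul_add]
  | mem_mul m hm k x _ hx =>
    obtain ⟨u, rfl⟩ := hm
    have hsum : ∑ i, b.coord i u • ι R (b i) = ι R u := by
      simp_rw [Module.Basis.coord_apply, ← map_smul, ← map_sum, b.sum_repr]
    have hanti : ∀ i, ι R (b i) * ι R u = -(ι R u * ι R (b i)) := fun i =>
      eq_neg_of_add_eq_zero_left (ι_add_mul_swap _ _)
    rw [numberOperator_apply] at hx
    simp only [numberOperator_apply, contractLeft_ι_mul, mul_sub, mul_smul_comm, ← mul_assoc,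
      hanti, neg_mul, sub_neg_eq_add, Finset.sum_add_distrib]
    simp only [← smul_mul_assoc, ← Finset.sum_mul, hsum, mul_assoc, ← Finset.mul_sum, hx]
    rw [mul_smul_comm, smul_mul_assoc, succ_nsmul']

theorem decompose_numberOperator (b : Module.Basis I R M) (x : ExteriorAlgebra R M) (k : ℕ) :
    (DirectSum.decompose (fun n ↦ ⋀[R]^n M) (numberOperator b x) k : ExteriorAlgebra R M) =
      k • (DirectSum.decompose (fun n ↦ ⋀[R]^n M) x k : ExteriorAlgebra R M) := by
  induction x using DirectSum.Decomposition.inductionOn (fun n ↦ ⋀[R]^n M) with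
  | zero => simp
  | @homogeneous j y =>
    obtain ⟨y, hy⟩ := y
    have hjy : j • y ∈ ⋀[R]^j M := nsmul_mem hy j
    rw [numberOperator_of_mem b hy]
    obtain rfl | hjk := eq_or_ne j k
    · rw [DirectSum.decompose_of_mem_same (fun n ↦ ⋀[R]^n M) hy,
        DirectSum.decompose_of_mem_same (fun n ↦ ⋀[R]^n M) hjy]
    · rw [DirectSum.decompose_of_mem_ne (fun n ↦ ⋀[R]^n M) hy hjk,
        DirectSum.decompose_of_mem_ne (fun n ↦ ⋀[R]^n M) hjy hjk, smul_zero]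
  | add x y hx hy => simp [DirectSum.decompose_add, hx, hy]

theorem exists_algebraMap_eq_of_forall_contractLeft_eq_zero {K V : Type*} [Field K] [CharZero K]
    [AddCommGroup V] [Module K V] [Module.Finite K V] {x : ExteriorAlgebra K V}
    (hx : ∀ d : Module.Dual K V, contractLeft d x = 0) : ∃ r, algebraMap K _ r = x := by
  set ℳ := fun n : ℕ ↦ ⋀[K]^n V
  have hN : numberOperator (Module.Free.chooseBasis K V) x = 0 := by
    simp [numberOperator_apply, hx]
  have hcomponent : ∀ k ≠ 0, (DirectSum.decompose ℳ x k : ExteriorAlgebra K V) = 0 := fun k hk => by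
    have := decompose_numberOperator (Module.Free.chooseBasis K V) x k
    rw [hN, DirectSum.decompose_zero, DirectSum.zero_apply, ZeroMemClass.coe_zero, eq_comm,
      ← Nat.cast_smul_eq_nsmul K, smul_eq_zero, Nat.cast_eq_zero] at this
    exact this.resolve_left hk
  have hx0 : x = DirectSum.decompose ℳ x 0 := by
    have : DirectSum.decompose ℳ x = DirectSum.of _ 0 (DirectSum.decompose ℳ x 0) := by
      ext k
      obtain rfl | hk := eq_or_ne k 0
      · simp
      · rw [hcomponent k hk, DirectSum.of_eq_of_ne 0 k _ hk, ZeroMemClass.coe_zero]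
    conv_lhs =>
      rw [← (DirectSum.decompose ℳ).symm_apply_apply x, this, DirectSum.decompose_symm_of]
  have hmem : (DirectSum.decompose ℳ x 0 : ExteriorAlgebra K V) ∈ ⋀[K]^0 V := SetLike.coe_mem _
  rw [← hx0, exteriorPower, pow_zero, Submodule.mem_one] at hmem
  exact hmem

end ExteriorAlgebra

namespace CliffordAlgebra

variable {R M : Type*} [CommRing R] [AddCommGroup M] [Module R M] {Q : QuadraticForm R M}

theorem ι_mul_sub_involute_mul_ι (v : M) (x : CliffordAlgebra Q) :
    ι Q v * x - involute x * ι Q v = contractLeft (QuadraticMap.polarBilin Q v) x := by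
  induction x using CliffordAlgebra.left_induction with
  | algebraMap r => simp [Algebra.commutes]
  | add x y hx hy => simp only [mul_add, map_add, add_mul, ← hx, ← hy]; abel
  | ι_mul m y hy =>
    rw [contractLeft_ι_mul, ← hy, ← mul_assoc, ι_mul_ι_comm, map_mul, involute_ι,
      QuadraticMap.polarBilin_apply_apply]
    simp only [Algebra.smul_def, sub_mul, mul_sub, neg_mul, mul_assoc]
    abel

variable {K V : Type*} [Field K] [CharZero K] [AddCommGroup V] [Module K V] [Module.Finite K V]
  {Q : QuadraticForm K V}

theorem exists_algebraMap_eq_of_involute_eq_of_commute_ι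
    (hQ : (QuadraticMap.polarBilin Q).Nondegenerate) {x : CliffordAlgebra Q}
    (hx : involute x = x) (hcomm : ∀ v, Commute (ι Q v) x) : ∃ r, algebraMap K _ r = x := by
  have : Invertible (2 : K) := invertibleOfNonzero two_ne_zero
  have hcontr : ∀ d : Module.Dual K V, contractLeft d x = 0 := fun d => by
    have hd : QuadraticMap.polarBilin Q ((LinearMap.BilinForm.toDual _ hQ).symm d) = d :=
      LinearMap.ext (LinearMap.BilinForm.apply_toDual_symm_apply d)
    rw [← hd, ← ι_mul_sub_involute_mul_ι, hx, (hcomm _).eq, sub_self]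
  obtain ⟨r, hr⟩ := ExteriorAlgebra.exists_algebraMap_eq_of_forall_contractLeft_eq_zero
    (x := equivExterior Q x) fun d => by simp [equivExterior, ← changeForm_contractLeft, hcontr]
  refine ⟨r, (equivExterior Q).injective ?_⟩
  rw [← hr]
  simp [equivExterior, changeForm_algebraMap]

end CliffordAlgebra

theorem polarBilin_Qneg_nondegenerate (n : ℕ) :
    (QuadraticMap.polarBilin (Qneg n)).Nondegenerate := by
  rw [QuadraticMap.nondegenerate_polar_iff, QuadraticMap.nondegenerate_iff_radical_eq_bot, Qneg,
    QuadraticForm.radical_weightedSumSquares, eq_bot_iff]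
  intro v hv
  rw [Pi.mem_spanSubset_iff] at hv
  exact funext fun i => hv i (by norm_num)

theorem conj_algebraMap {n : ℕ} (r : ℝ) :
    conj (algebraMap ℝ (Cl n) r) = algebraMap ℝ (Cl n) r := by
  simp [conj]

theorem stmt16_general (n : ℕ) (x : Cl n) (hx : InSpin x)
    (hfix : ∀ v : Fin n → ℝ, x * ι (Qneg n) v * conj x = ι (Qneg n) v) :
    x = 1 ∨ x = -1 := by
  obtain ⟨hunit, heven, hnorm⟩ := hx
  have hnorm_left : conj x * x = 1 := by
    obtain ⟨u, rfl⟩ := hunit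
    rw [← Units.mul_eq_one_iff_inv_eq.1 hnorm, Units.inv_mul]
  have hcomm : ∀ v, Commute (ι (Qneg n) v) x := fun v => by
    calc ι (Qneg n) v * x = x * ι (Qneg n) v * conj x * x := by rw [hfix]
      _ = x * ι (Qneg n) v := by rw [mul_assoc _ (conj x), hnorm_left, mul_one]
  obtain ⟨r, rfl⟩ := exists_algebraMap_eq_of_involute_eq_of_commute_ι
    (polarBilin_Qneg_nondegenerate n) heven hcomm
  have hr : r * r = 1 := by
    apply (algebraMap ℝ (Cl n)).injective
    rwa [conj_algebraMap, ← map_mul, ← map_one (algebraMap ℝ (Cl n))] at hnorm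
  rcases mul_self_eq_one_iff.1 hr with rfl | rfl <;> simp

/-- The kernel of the double covering `λₙ : Spin(n) → SO(n)` is `{±1}`: if `x ∈ Spin(n)`
satisfies `x · ι(v) · x̄ = ι(v)` for all `v ∈ ℝⁿ`, then `x = 1` or `x = -1`. -/
theorem stmt16 (n : ℕ) (hn : 0 < n) (x : Cl n) (hx : InSpin x)
    (hfix : ∀ v : Fin n → ℝ, x * ι (Qneg n) v * conj x = ι (Qneg n) v) :
    x = 1 ∨ x = -1 :=
  stmt16_general n x hx hfix
end
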